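/- Define L₁(n,b) := ∫₀¹ (Γ(b-p)/Γ(b+1)) · (Γ(n-b+p)/Γ(n-b+1)) · dp/(Γ(1-p)Γ(1+p)). Let (b_n) be a sequence of integers with 2 ≤ b_n ≤ n-1 and b_n/n → 0. Then lim_{n→∞} b_n·(b_n-1)·(log(n/b_n))²·L₁(n,b_n) = 1. Equivalently, (b(b-1)/n)·log²(n/b)·E[SFS_{n,b}] → θ, since E[SFS_{n,b}] = θ·n·L₁(n,b). -/

import Mathlib

/-!
Substituting `p = 1 - q` and expanding the Gamma quotients into rising products gives
`b (b - 1) L₁(n, b) = ∫₀¹ q R(q) dq`, where `R(q)` is a normalised product of factors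
`j + 1 + q` and `j + 2 - q`. Bounding each factor by an exponential
(`x / (1 + x) ≤ log (1 + x) ≤ x`) squeezes `R(q)` between `exp (-q Y)` and `exp (-q y)`, where
`Y` and `y` are differences of harmonic numbers, hence `log (n / b) + O(1)`. Since
`y² ∫₀¹ q exp (-q y) dq = 1 - (1 + y) exp (-y) → 1`, both sides of the squeeze, multiplied by
`log² (n / b)`, tend to `1`.
-/

open Real

/-- `L₁(n,b) = ∫₀¹ (Γ(b-p)/Γ(b+1)) (Γ(n-b+p)/Γ(n-b+1)) dp/(Γ(1-p)Γ(1+p))`. -/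
noncomputable def L1 (n b : ℕ) : ℝ :=
  ∫ p in (0:ℝ)..1, (Real.Gamma ((b : ℝ) - p) / Real.Gamma ((b : ℝ) + 1)) *
    (Real.Gamma ((n : ℝ) - (b : ℝ) + p) / Real.Gamma ((n : ℝ) - (b : ℝ) + 1)) /
    (Real.Gamma (1 - p) * Real.Gamma (1 + p))

open Filter Finset Topology
open scoped Nat

theorem Real.Gamma_add_nat_eq_mul_prod {s : ℝ} (hs : 0 < s) (k : ℕ) :
    Gamma (s + k) = Gamma s * ∏ j ∈ range k, (s + j) := by
  induction k with
  | zero => simp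
  | succ k ih =>
    rw [prod_range_succ, Nat.cast_succ, ← add_assoc, Gamma_add_one (by positivity), ih]
    ring

/-- For `b = k + 2`, `n - b = l + 1` and `p = 1 - q`, the integrand of `L1 n b` is
`q * sfsKernel k l q / (b! (n - b)!)`. -/
noncomputable def sfsKernel (k l : ℕ) (q : ℝ) : ℝ :=
  (∏ j ∈ range k, ((j : ℝ) + 1 + q)) * ∏ j ∈ range l, ((j : ℝ) + 2 - q)

lemma Gamma_mul_Gamma_div_eq_mul_sfsKernel (k l : ℕ) {q : ℝ} (hq0 : 0 ≤ q) (hq1 : q ≤ 1) :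
    Gamma (k + 1 + q) * Gamma (l + 2 - q) / (Gamma q * Gamma (2 - q)) = q * sfsKernel k l q := by
  rcases hq0.eq_or_lt with rfl | hq
  · simp -- both sides vanish, the left one because `Gamma 0 = 0` in Mathlib
  have hA : Gamma (k + 1 + q) = q * Gamma q * ∏ j ∈ range k, ((j : ℝ) + 1 + q) := by
    rw [show (k : ℝ) + 1 + q = (q + 1) + k by ring, Gamma_add_nat_eq_mul_prod (by positivity),
      Gamma_add_one hq.ne']
    exact congrArg _ (prod_congr rfl fun j _ => by ring)
  have hB : Gamma (l + 2 - q) = Gamma (2 - q) * ∏ j ∈ range l, ((j : ℝ) + 2 - q) := by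
    rw [show (l : ℝ) + 2 - q = (2 - q) + l by ring, Gamma_add_nat_eq_mul_prod (by linarith)]
    exact congrArg _ (prod_congr rfl fun j _ => by ring)
  have hGq : Gamma q ≠ 0 := (Gamma_pos_of_pos hq).ne'
  have hG2q : Gamma (2 - q) ≠ 0 := (Gamma_pos_of_pos (by linarith)).ne'
  rw [hA, hB, sfsKernel]
  field_simp

lemma mul_L1_eq_integral_sfsKernel (k l : ℕ) :
    ((k + 2 : ℕ) : ℝ) * (((k + 2 : ℕ) : ℝ) - 1) * L1 (k + l + 3) (k + 2) =
      (∫ q in (0 : ℝ)..1, q * sfsKernel k l q) / (k ! * (l + 1)!) := by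
  have hL : L1 (k + l + 3) (k + 2) =
      ∫ q in (0 : ℝ)..1, q * sfsKernel k l q / ((k + 2)! * (l + 1)!) := by
    have hflip (f : ℝ → ℝ) : ∫ q in (0 : ℝ)..1, f (1 - q) = ∫ p in (0 : ℝ)..1, f p := by
      simp [intervalIntegral.integral_comp_sub_left]
    rw [L1, ← hflip]
    refine intervalIntegral.integral_congr fun q hq => ?_
    rw [Set.uIcc_of_le zero_le_one] at hq
    rw [← Gamma_mul_Gamma_div_eq_mul_sfsKernel k l hq.1 hq.2]
    have h1 := Gamma_nat_eq_factorial (k + 2)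
    have h2 := Gamma_nat_eq_factorial (l + 1)
    push_cast at h1 h2 ⊢
    rw [show (k : ℝ) + 2 - (1 - q) = k + 1 + q by ring,
      show (k : ℝ) + l + 3 - (k + 2) + (1 - q) = l + 2 - q by ring,
      show (k : ℝ) + l + 3 - (k + 2) + 1 = l + 1 + 1 by ring,
      show 1 - (1 - q) = q by ring, show 1 + (1 - q) = 2 - q by ring, h1, h2]
    ring
  rw [hL, intervalIntegral.integral_div, Nat.factorial_succ (k + 1), Nat.factorial_succ k]
  push_cast
  field_simp
  ring

lemma mul_exp_div_le_add {c t : ℝ} (hc : 0 < c) (hct : 0 < c + t) :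
    c * exp (t / (c + t)) ≤ c + t := by
  have hlog : t / (c + t) ≤ log ((c + t) / c) := by
    have := one_sub_inv_le_log_of_pos (div_pos hct hc)
    rwa [inv_div, one_sub_div hct.ne', add_sub_cancel_left] at this
  calc c * exp (t / (c + t)) ≤ c * ((c + t) / c) := by
        gcongr
        exact (exp_le_exp.2 hlog).trans (exp_log (div_pos hct hc)).le
    _ = c + t := by field_simp

lemma add_le_mul_exp_div {c : ℝ} (t : ℝ) (hc : 0 < c) : c + t ≤ c * exp (t / c) :=
  calc c + t = c * (t / c + 1) := by field_simp; ring
    _ ≤ c * exp (t / c) := by gcongr; exact add_one_le_exp _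

lemma prod_mul_exp {ι : Type*} (s : Finset ι) (c u : ι → ℝ) :
    ∏ i ∈ s, c i * exp (u i) = (∏ i ∈ s, c i) * exp (∑ i ∈ s, u i) := by
  rw [prod_mul_distrib, exp_sum]

lemma sum_range_inv_add_one (k : ℕ) : ∑ j ∈ range k, ((j : ℝ) + 1)⁻¹ = harmonic k := by
  simp [harmonic]

lemma sum_range_inv_add_two (k : ℕ) :
    ∑ j ∈ range k, ((j : ℝ) + 2)⁻¹ = harmonic (k + 1) - 1 := by
  rw [← sum_range_inv_add_one, sum_range_succ']
  push_cast
  ring_nf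

lemma prod_range_add_one_eq_factorial_real (k : ℕ) : ∏ j ∈ range k, ((j : ℝ) + 1) = k ! := by
  exact_mod_cast prod_range_add_one_eq_factorial k

lemma prod_range_add_two_eq_factorial_real (k : ℕ) :
    ∏ j ∈ range k, ((j : ℝ) + 2) = (k + 1)! := by
  rw [← prod_range_add_one_eq_factorial_real, prod_range_succ']
  push_cast
  ring_nf

lemma prod_range_add_bounds (k : ℕ) {q : ℝ} (hq0 : 0 ≤ q) (hq1 : q ≤ 1) :
    k ! * exp (q * (harmonic (k + 1) - 1)) ≤ ∏ j ∈ range k, ((j : ℝ) + 1 + q) ∧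
      ∏ j ∈ range k, ((j : ℝ) + 1 + q) ≤ k ! * exp (q * harmonic k) := by
  rw [← sum_range_inv_add_two, ← sum_range_inv_add_one, mul_sum, mul_sum,
    ← prod_range_add_one_eq_factorial_real, ← prod_mul_exp, ← prod_mul_exp]
  constructor <;> refine prod_le_prod (fun j _ => by positivity) fun j _ => ?_
  · calc ((j : ℝ) + 1) * exp (q * ((j : ℝ) + 2)⁻¹)
        ≤ ((j : ℝ) + 1) * exp (q / ((j + 1) + q)) := by
          rw [← div_eq_mul_inv]
          gcongr ?_ * exp ?_
          exact div_le_div_of_nonneg_left hq0 (by positivity) (by linarith)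
      _ ≤ (j + 1) + q := mul_exp_div_le_add (by positivity) (by positivity)
  · rw [← div_eq_mul_inv]
    exact add_le_mul_exp_div q (by positivity)

lemma prod_range_sub_bounds (k : ℕ) {q : ℝ} (hq0 : 0 ≤ q) (hq1 : q ≤ 1) :
    (k + 1)! * exp (-(q * harmonic k)) ≤ ∏ j ∈ range k, ((j : ℝ) + 2 - q) ∧
      ∏ j ∈ range k, ((j : ℝ) + 2 - q) ≤ (k + 1)! * exp (-(q * (harmonic (k + 1) - 1))) := by
  rw [← sum_range_inv_add_two, ← sum_range_inv_add_one, mul_sum, mul_sum, ← sum_neg_distrib,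
    ← sum_neg_distrib, ← prod_range_add_two_eq_factorial_real, ← prod_mul_exp, ← prod_mul_exp]
  constructor
  · refine prod_le_prod (fun j _ => by positivity) fun j _ => ?_
    calc ((j : ℝ) + 2) * exp (-(q * ((j : ℝ) + 1)⁻¹))
        ≤ ((j : ℝ) + 2) * exp (-q / ((j + 2) + -q)) := by
          rw [← div_eq_mul_inv, neg_div]
          gcongr ?_ * exp (-?_)
          exact div_le_div_of_nonneg_left hq0 (by positivity) (by linarith)
      _ ≤ (j + 2) + -q := mul_exp_div_le_add (by positivity) (by linarith)
  · refine prod_le_prod (fun j _ => by linarith [j.cast_nonneg (α := ℝ)]) fun j _ => ?_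
    rw [← div_eq_mul_inv, ← neg_div, sub_eq_add_neg]
    exact add_le_mul_exp_div (-q) (by positivity)

lemma sfsKernel_bounds (k l : ℕ) {q : ℝ} (hq0 : 0 ≤ q) (hq1 : q ≤ 1) :
    k ! * (l + 1)! * exp (-((harmonic l - harmonic (k + 1) + 1) * q)) ≤ sfsKernel k l q ∧
      sfsKernel k l q ≤ k ! * (l + 1)! * exp (-((harmonic (l + 1) - harmonic k - 1) * q)) := by
  obtain ⟨hA₁, hA₂⟩ := prod_range_add_bounds k hq0 hq1
  obtain ⟨hB₁, hB₂⟩ := prod_range_sub_bounds l hq0 hq1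
  have hsplit (a c u v : ℝ) : a * c * exp (u + v) = a * exp u * (c * exp v) := by
    rw [exp_add]; ring
  constructor
  · calc _ = k ! * exp (q * (harmonic (k + 1) - 1)) * ((l + 1)! * exp (-(q * harmonic l))) := by
          rw [← hsplit]; ring_nf
      _ ≤ sfsKernel k l q := mul_le_mul hA₁ hB₁ (by positivity) (hA₁.trans' (by positivity))
  · calc sfsKernel k l q
        ≤ k ! * exp (q * harmonic k) * ((l + 1)! * exp (-(q * (harmonic (l + 1) - 1)))) :=
          mul_le_mul hA₂ hB₂ (hB₁.trans' (by positivity)) (by positivity)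
      _ = _ := by rw [← hsplit]; ring_nf

noncomputable def expMoment (y : ℝ) : ℝ := ∫ q in (0 : ℝ)..1, q * exp (-(y * q))

lemma sq_mul_expMoment {y : ℝ} (hy : y ≠ 0) : y ^ 2 * expMoment y = 1 - (1 + y) * exp (-y) := by
  have hderiv : ∀ q ∈ Set.uIcc (0 : ℝ) 1, HasDerivAt
      (fun q => -(q / y + 1 / y ^ 2) * exp (-(y * q))) (q * exp (-(y * q))) q := by
    intro q _
    have h1 : HasDerivAt (fun q : ℝ => -(q / y + 1 / y ^ 2)) (-(1 / y)) q :=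
      (((hasDerivAt_id' q).div_const y).add_const _).neg
    have h2 : HasDerivAt (fun q : ℝ => exp (-(y * q))) (exp (-(y * q)) * -(y * 1)) q :=
      ((hasDerivAt_id' q).const_mul y).neg.exp
    refine (h1.mul h2).congr_deriv ?_
    field_simp
    ring
  rw [expMoment, intervalIntegral.integral_eq_sub_of_hasDerivAt hderiv
    (Continuous.intervalIntegrable (by fun_prop) _ _)]
  field_simp
  simp only [mul_zero, zero_add, neg_zero, exp_zero, mul_one, sub_neg_eq_add]
  ring

lemma tendsto_sq_mul_expMoment : Tendsto (fun y => y ^ 2 * expMoment y) atTop (𝓝 1) := by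
  have h : Tendsto (fun y : ℝ => 1 - (exp (-y) + y ^ 1 * exp (-y))) atTop (𝓝 (1 - (0 + 0))) :=
    tendsto_const_nhds.sub
      (tendsto_exp_neg_atTop_nhds_zero.add (tendsto_pow_mul_exp_neg_atTop_nhds_zero 1))
  rw [add_zero, sub_zero] at h
  refine h.congr' ((eventually_ne_atTop 0).mono fun y hy => ?_)
  show _ = y ^ 2 * expMoment y
  rw [sq_mul_expMoment hy]
  ring

lemma tendsto_sq_mul_expMoment_of_abs_sub_le {ι : Type*} {l : Filter ι} {x y : ι → ℝ} {C : ℝ}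
    (hx : Tendsto x l atTop) (hxy : ∀ᶠ i in l, |y i - x i| ≤ C) :
    Tendsto (fun i => x i ^ 2 * expMoment (y i)) l (𝓝 1) := by
  have hy : Tendsto y l atTop :=
    tendsto_atTop_mono' l (hxy.mono fun i h => by linarith [(abs_le.1 h).1])
      (tendsto_atTop_add_const_right l (-C) hx)
  have hratio : Tendsto (fun i => x i / y i) l (𝓝 1) := by
    have h0 : Tendsto (fun i => (x i - y i) / y i) l (𝓝 0) := by
      refine squeeze_zero_norm' ?_ ((tendsto_const_nhds (x := C)).div_atTop hy)
      filter_upwards [hxy, hy.eventually_gt_atTop 0] with i h hpos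
      rw [norm_div, norm_eq_abs, norm_eq_abs, abs_sub_comm, abs_of_pos hpos]
      gcongr
    have h1 := h0.const_add 1
    rw [add_zero] at h1
    refine h1.congr' ?_
    filter_upwards [hy.eventually_gt_atTop 0] with i hpos
    field_simp
    ring
  have h := (hratio.pow 2).mul (tendsto_sq_mul_expMoment.comp hy)
  rw [one_pow, one_mul] at h
  refine h.congr' ?_
  filter_upwards [hy.eventually_gt_atTop 0] with i hpos
  simp only [Function.comp]
  field_simp

noncomputable def decayRateMin (n b : ℕ) : ℝ := harmonic (n - b) - harmonic (b - 2) - 1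

noncomputable def decayRateMax (n b : ℕ) : ℝ := harmonic (n - b - 1) - harmonic (b - 1) + 1

lemma expMoment_le_mul_L1_le {n b : ℕ} (hb : 2 ≤ b) (hbn : b < n) :
    expMoment (decayRateMax n b) ≤ b * (b - 1) * L1 n b ∧
      b * (b - 1) * L1 n b ≤ expMoment (decayRateMin n b) := by
  obtain ⟨k, rfl⟩ : ∃ k, b = k + 2 := ⟨b - 2, by omega⟩
  obtain ⟨l, rfl⟩ : ∃ l, n = k + l + 3 := ⟨n - k - 3, by omega⟩
  rw [decayRateMin, decayRateMax, mul_L1_eq_integral_sfsKernel, le_div_iff₀ (by positivity),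
    div_le_iff₀ (by positivity)]
  simp only [show k + l + 3 - (k + 2) = l + 1 by omega, show l + 1 - 1 = l by omega,
    show k + 2 - 2 = k by omega, show k + 2 - 1 = k + 1 by omega]
  have hint {f g : ℝ → ℝ} (hf : Continuous f) (hg : Continuous g)
      (h : ∀ q ∈ Set.Icc (0 : ℝ) 1, f q ≤ g q) : ∫ q in (0 : ℝ)..1, f q ≤ ∫ q in (0 : ℝ)..1, g q :=
    intervalIntegral.integral_mono_on zero_le_one (hf.intervalIntegrable _ _)
      (hg.intervalIntegrable _ _) h
  have hK : Continuous (sfsKernel k l) := by unfold sfsKernel; fun_prop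
  constructor
  · rw [expMoment, ← intervalIntegral.integral_mul_const]
    refine hint (by fun_prop) (by fun_prop) fun q hq => ?_
    calc q * exp (-((harmonic l - harmonic (k + 1) + 1) * q)) * (k ! * (l + 1)!)
        = q * (k ! * (l + 1)! * exp (-((harmonic l - harmonic (k + 1) + 1) * q))) := by ring
      _ ≤ q * sfsKernel k l q :=
          mul_le_mul_of_nonneg_left (sfsKernel_bounds k l hq.1 hq.2).1 hq.1
  · rw [expMoment, ← intervalIntegral.integral_mul_const]
    refine hint (by fun_prop) (by fun_prop) fun q hq => ?_
    calc q * sfsKernel k l q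
        ≤ q * (k ! * (l + 1)! * exp (-((harmonic (l + 1) - harmonic k - 1) * q))) :=
          mul_le_mul_of_nonneg_left (sfsKernel_bounds k l hq.1 hq.2).2 hq.1
      _ = q * exp (-((harmonic (l + 1) - harmonic k - 1) * q)) * (k ! * (l + 1)!) := by ring

lemma abs_harmonic_sub_log_succ_le_one (k : ℕ) : |(harmonic k : ℝ) - log (k + 1)| ≤ 1 := by
  have hlow := log_add_one_le_harmonic k
  have hup := harmonic_le_one_add_log k
  have hmono : log k ≤ log (k + 1) := by
    rcases k.eq_zero_or_pos with rfl | hk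
    · simp
    · exact log_le_log (by positivity) (by linarith)
  push_cast at hlow
  rw [abs_le]
  constructor <;> linarith

lemma abs_log_sub_log_le_log_two {u v : ℝ} (hu : 0 < u) (hv : 0 < v) (huv : u ≤ 2 * v)
    (hvu : v ≤ 2 * u) : |log u - log v| ≤ log 2 := by
  have h₁ : log (u / v) ≤ log 2 := log_le_log (by positivity) (by rwa [div_le_iff₀ hv])
  have h₂ : log (v / u) ≤ log 2 := log_le_log (by positivity) (by rwa [div_le_iff₀ hu])
  rw [log_div hu.ne' hv.ne'] at h₁
  rw [log_div hv.ne' hu.ne'] at h₂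
  rw [abs_le]
  constructor <;> linarith

lemma abs_decayRate_sub_log_le {n b : ℕ} (hb : 2 ≤ b) (hbn : 2 * b ≤ n) :
    |decayRateMax n b - log (n / b)| ≤ 5 ∧ |decayRateMin n b - log (n / b)| ≤ 5 := by
  obtain ⟨k, rfl⟩ : ∃ k, b = k + 2 := ⟨b - 2, by omega⟩
  obtain ⟨l, rfl⟩ : ∃ l, n = k + l + 3 := ⟨n - k - 3, by omega⟩
  have hkl : (k : ℝ) + 1 ≤ l := by exact_mod_cast (show k + 1 ≤ l by omega)
  rw [decayRateMin, decayRateMax]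
  simp only [show k + l + 3 - (k + 2) = l + 1 by omega, show l + 1 - 1 = l by omega,
    show k + 2 - 2 = k by omega, show k + 2 - 1 = k + 1 by omega]
  push_cast
  rw [log_div (by positivity) (by positivity)]
  have hHl1 := abs_harmonic_sub_log_succ_le_one (l + 1)
  have hHk1 := abs_harmonic_sub_log_succ_le_one (k + 1)
  push_cast at hHl1 hHk1
  rw [show (l : ℝ) + 1 + 1 = l + 2 by ring] at hHl1
  rw [show (k : ℝ) + 1 + 1 = k + 2 by ring] at hHk1
  obtain ⟨hHl1₁, hHl1₂⟩ := abs_le.1 hHl1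
  obtain ⟨hHk1₁, hHk1₂⟩ := abs_le.1 hHk1
  obtain ⟨hHl₁, hHl₂⟩ := abs_le.1 (abs_harmonic_sub_log_succ_le_one l)
  obtain ⟨hHk₁, hHk₂⟩ := abs_le.1 (abs_harmonic_sub_log_succ_le_one k)
  obtain ⟨hn₁, hn₂⟩ := abs_le.1 (abs_log_sub_log_le_log_two (u := l + 1) (v := k + l + 3)
    (by positivity) (by positivity) (by linarith) (by linarith))
  obtain ⟨hn'₁, hn'₂⟩ := abs_le.1 (abs_log_sub_log_le_log_two (u := l + 2) (v := k + l + 3)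
    (by positivity) (by positivity) (by linarith) (by linarith))
  obtain ⟨hb₁, hb₂⟩ := abs_le.1 (abs_log_sub_log_le_log_two (u := k + 1) (v := k + 2)
    (by positivity) (by positivity) (by linarith) (by linarith))
  have hlog2 := log_two_lt_d9
  rw [abs_le, abs_le]
  refine ⟨⟨?_, ?_⟩, ?_, ?_⟩ <;> linarith

lemma tendsto_log_div_atTop {ι : Type*} {l : Filter ι} {u v : ι → ℝ}
    (h0 : Tendsto (fun i => u i / v i) l (𝓝 0)) (hpos : ∀ᶠ i in l, 0 < u i / v i) :
    Tendsto (fun i => log (v i / u i)) l atTop := by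
  refine (tendsto_log_atTop.comp
    (tendsto_nhdsWithin_iff.2 ⟨h0, hpos⟩).inv_tendsto_nhdsGT_zero).congr fun i => ?_
  simp [inv_div]

theorem stmt10 (θ : ℝ) (b : ℕ → ℕ)
    (hb : ∀ᶠ n : ℕ in Filter.atTop, 2 ≤ b n ∧ b n ≤ n - 1)
    (h0 : Filter.Tendsto (fun n : ℕ => (b n : ℝ) / (n : ℝ)) Filter.atTop (nhds 0)) :
    Filter.Tendsto (fun n : ℕ =>
        (b n : ℝ) * ((b n : ℝ) - 1) * (Real.log ((n : ℝ) / (b n : ℝ))) ^ 2 * L1 n (b n))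
      Filter.atTop (nhds 1) ∧
    Filter.Tendsto (fun n : ℕ =>
        ((b n : ℝ) * ((b n : ℝ) - 1) / (n : ℝ)) * (Real.log ((n : ℝ) / (b n : ℝ))) ^ 2 *
          (θ * (n : ℝ) * L1 n (b n)))
      Filter.atTop (nhds θ) := by
  have hsmall : ∀ᶠ n in atTop, 2 ≤ b n ∧ 2 * b n < n := by
    filter_upwards [hb, h0.eventually_lt_const (show (0 : ℝ) < 1 / 2 by norm_num),
      eventually_gt_atTop 0] with n hbn hlt hn
    have : (2 * b n : ℝ) < n := by
      rw [div_lt_iff₀ (by positivity)] at hlt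
      linarith
    exact ⟨hbn.1, by exact_mod_cast this⟩
  have hlog : Tendsto (fun n : ℕ => log (n / b n)) atTop atTop :=
    tendsto_log_div_atTop h0 (hsmall.mono fun n h => by
      have hb0 : (0 : ℝ) < b n := by exact_mod_cast (show 0 < b n by omega)
      have hn0 : (0 : ℝ) < n := by exact_mod_cast (show 0 < n by omega)
      exact div_pos hb0 hn0)
  have hrates := hsmall.mono fun n h => abs_decayRate_sub_log_le h.1 h.2.le
  have hmax := tendsto_sq_mul_expMoment_of_abs_sub_le hlog (hrates.mono fun _ h => h.1)
  have hmin := tendsto_sq_mul_expMoment_of_abs_sub_le hlog (hrates.mono fun _ h => h.2)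
  have hmain : Tendsto (fun n : ℕ =>
      (b n : ℝ) * ((b n : ℝ) - 1) * (log ((n : ℝ) / (b n : ℝ))) ^ 2 * L1 n (b n)) atTop (𝓝 1) := by
    have hsandwich := hsmall.mono fun n h => expMoment_le_mul_L1_le (n := n) h.1 (by omega)
    have hcomm (n : ℕ) : (b n : ℝ) * (b n - 1) * log (n / b n) ^ 2 * L1 n (b n) =
        log (n / b n) ^ 2 * (b n * (b n - 1) * L1 n (b n)) := by ring
    refine tendsto_of_tendsto_of_tendsto_of_le_of_le' hmax hmin ?_ ?_ <;>
      filter_upwards [hsandwich] with n h <;> rw [hcomm]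
    · exact mul_le_mul_of_nonneg_left h.1 (sq_nonneg _)
    · exact mul_le_mul_of_nonneg_left h.2 (sq_nonneg _)
  refine ⟨hmain, ?_⟩
  have hθ := hmain.const_mul θ
  rw [mul_one] at hθ
  refine hθ.congr' ?_
  filter_upwards [eventually_gt_atTop 0] with n hn
  field_simp
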